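/- arXiv:1311.5031 — 2 statements merged into one kernel-verified Lean document; each statement's English description precedes it below -/
import Mathlib

section
/- Every nonempty monomial prime partition ideal contains a unique minimal element with respect to the containment order ⊆ on partitions. -/
/-- A partition: a weakly decreasing sequence `part 0 ≥ part 1 ≥ ⋯` of natural
numbers that is eventually zero.  `part i` is the `(i+1)`-st part `λ_{i+1}`
(so we use 0-based indexing throughout). -/
structure Partition' where
  part : ℕ → ℕ
  antitone : ∀ ⦃i j : ℕ⦄, i ≤ j → part j ≤ part i
  eventually_zero : ∃ N, ∀ i, N ≤ i → part i = 0

/-- `ν` is a monomial constituent of `m_λ · m_μ`: there is a permutation `σ` of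
the indices such that `ν` is the weakly decreasing rearrangement (witnessed by
the bijection `τ`) of the sequence `i ↦ λ_i + μ_{σ i}`. -/
def IsMonomialConstituent (l m n : Partition') : Prop :=
  ∃ σ τ : Equiv.Perm ℕ, ∀ i, n.part i = l.part (τ i) + m.part (σ (τ i))

/-- A partition ideal: upward closed for the containment order. -/
def IsPartitionIdeal (I : Set Partition') : Prop :=
  ∀ l m : Partition', l ∈ I → (∀ i, l.part i ≤ m.part i) → m ∈ I

/-- A set of partitions is monomial prime if it is not everything and whenever
every monomial constituent of `m_λ · m_μ` lies in it, `λ` or `μ` lies in it. -/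
def IsMonomialPrime (I : Set Partition') : Prop :=
  I ≠ Set.univ ∧ ∀ l m : Partition',
    (∀ n : Partition', IsMonomialConstituent l m n → n ∈ I) → l ∈ I ∨ m ∈ I

/-! ### Auxiliary constructions -/

lemma Partition'.ext' {l m : Partition'} (h : l.part = m.part) : l = m := by
  cases l; cases m; cases h; rfl

/-- The rectangle partition with `r` rows of size `k`. -/
def rect (k r : ℕ) : Partition' where
  part i := if i < r then k else 0
  antitone := by
    intro i j hij
    split_ifs with h1 h2 <;> omega
  eventually_zero := ⟨r, fun i hi => if_neg (by omega)⟩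

/-- Cap all parts of a partition at `c`. -/
def cap (π : Partition') (c : ℕ) : Partition' where
  part i := min (π.part i) c
  antitone := fun _ _ hij => min_le_min (π.antitone hij) le_rfl
  eventually_zero := by
    obtain ⟨N, hN⟩ := π.eventually_zero
    exact ⟨N, fun i hi => by simp [hN i hi]⟩

/-- Truncate a partition to its first `r` parts. -/
def trunc (π : Partition') (r : ℕ) : Partition' where
  part i := if i < r then π.part i else 0
  antitone := by
    intro i j hij
    by_cases h1 : j < r
    · rw [if_pos h1, if_pos (lt_of_le_of_lt hij h1)]
      exact π.antitone hij
    · rw [if_neg h1]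
      exact Nat.zero_le _
  eventually_zero := ⟨r, fun i hi => if_neg (by omega)⟩

lemma exists_mem_le_of_card {T : Finset ℕ} {i : ℕ} (h : i + 1 ≤ T.card) :
    ∃ j ∈ T, i ≤ j := by
  by_contra hcon
  push_neg at hcon
  have hsub : T ⊆ Finset.range i := fun j hj => Finset.mem_range.mpr (hcon j hj)
  have := Finset.card_le_card hsub
  rw [Finset.card_range] at this
  omega

/-- If a partition has at least `i+1` parts of size `≥ v`, then its `i`-th part
is at least `v`. -/
lemma npart_ge (n : Partition') {v i : ℕ} (T : Finset ℕ) (hc : i + 1 ≤ T.card)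
    (hT : ∀ j ∈ T, v ≤ n.part j) : v ≤ n.part i := by
  obtain ⟨j, hjT, hij⟩ := exists_mem_le_of_card hc
  exact le_trans (hT j hjT) (n.antitone hij)

/-! ### The weight function and existence of minimal elements -/

noncomputable def wt (π : Partition') : ℕ := ∑ᶠ i, π.part i

lemma wt_eq (π : Partition') {N : ℕ} (hN : ∀ i, N ≤ i → π.part i = 0) :
    wt π = ∑ i ∈ Finset.range N, π.part i := by
  apply finsum_eq_sum_of_support_subset
  intro i hi
  simp only [Function.mem_support] at hi
  simp only [Finset.coe_range, Set.mem_Iio]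
  by_contra h
  exact hi (hN i (by omega))

lemma wt_lt {l π : Partition'} (hle : ∀ i, l.part i ≤ π.part i) (hne : l ≠ π) :
    wt l < wt π := by
  have hex : ∃ i, l.part i ≠ π.part i := by
    by_contra h
    push_neg at h
    exact hne (Partition'.ext' (funext h))
  obtain ⟨i0, hi0⟩ := hex
  obtain ⟨N1, h1⟩ := l.eventually_zero
  obtain ⟨N2, h2⟩ := π.eventually_zero
  rw [wt_eq l (N := max (max N1 N2) (i0 + 1)) (fun i hi => h1 i (by omega)),
    wt_eq π (N := max (max N1 N2) (i0 + 1)) (fun i hi => h2 i (by omega))]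
  apply Finset.sum_lt_sum (fun i _ => hle i)
  exact ⟨i0, Finset.mem_range.mpr (by omega), lt_of_le_of_ne (hle i0) hi0⟩

/-! ### Step 1: minimal elements of a prime ideal are rectangles -/

lemma minimal_rect (I : Set Partition') (hideal : IsPartitionIdeal I)
    (hprime : IsMonomialPrime I) (π : Partition') (hπI : π ∈ I)
    (hmin : ∀ l : Partition', l ∈ I → l ≠ π → ¬ (∀ i, l.part i ≤ π.part i))
    (r : ℕ) (hr0 : π.part r ≠ 0) (hrtop : π.part r ≠ π.part 0) : False := by
  have hclt : π.part r < π.part 0 :=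
    lt_of_le_of_ne (π.antitone (Nat.zero_le r)) hrtop
  have hlI : cap π (π.part r) ∉ I := by
    intro h
    refine hmin _ h ?_ (fun i => min_le_left _ _)
    intro he
    have h0 : min (π.part 0) (π.part r) = π.part 0 :=
      congrArg (fun x => Partition'.part x 0) he
    omega
  have hmI : trunc π r ∉ I := by
    intro h
    refine hmin _ h ?_ ?_
    · intro he
      have h0 : (if r < r then π.part r else 0) = π.part r :=
        congrArg (fun x => Partition'.part x r) he
      rw [if_neg (lt_irrefl r)] at h0
      exact hr0 h0.symm
    · intro i
      dsimp only [trunc]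
      split_ifs
      · exact le_rfl
      · exact Nat.zero_le _
  have hall : ∀ n : Partition',
      IsMonomialConstituent (cap π (π.part r)) (trunc π r) n → n ∈ I := by
    rintro n ⟨σ, τ, hn⟩
    refine hideal π n hπI (fun i => ?_)
    rcases lt_or_ge i r with hir | hir
    · refine npart_ge n ((Finset.range (i + 1)).image (fun t => τ.symm (σ.symm t))) ?_ ?_
      · rw [Finset.card_image_of_injective _ (fun x y h => σ.symm.injective (τ.symm.injective h)),
          Finset.card_range]
      · intro j hj
        obtain ⟨t, ht, rfl⟩ := Finset.mem_image.mp hj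
        have ht' : t < i + 1 := Finset.mem_range.mp ht
        rw [hn, Equiv.apply_symm_apply, Equiv.apply_symm_apply]
        have hm : (trunc π r).part t = π.part t := by
          dsimp only [trunc]; rw [if_pos (by omega)]
        calc π.part i ≤ π.part t := π.antitone (by omega)
          _ = (trunc π r).part t := hm.symm
          _ ≤ _ := Nat.le_add_left _ _
    · refine npart_ge n ((Finset.range (i + 1)).image (fun s => τ.symm s)) ?_ ?_
      · rw [Finset.card_image_of_injective _ τ.symm.injective, Finset.card_range]
      · intro j hj
        obtain ⟨s, hs, rfl⟩ := Finset.mem_image.mp hj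
        have hs' : s < i + 1 := Finset.mem_range.mp hs
        rw [hn, Equiv.apply_symm_apply]
        have hl : π.part i ≤ (cap π (π.part r)).part s :=
          le_min (π.antitone (by omega)) (π.antitone hir)
        exact le_trans hl (Nat.le_add_right _ _)
  rcases hprime.2 _ _ hall with h | h
  · exact hlI h
  · exact hmI h

lemma minimal_rect_data (I : Set Partition') (hideal : IsPartitionIdeal I)
    (hprime : IsMonomialPrime I) (π : Partition') (hπI : π ∈ I)
    (hmin : ∀ l : Partition', l ∈ I → l ≠ π → ¬ (∀ i, l.part i ≤ π.part i)) :
    ∃ a p : ℕ, 1 ≤ a ∧ 1 ≤ p ∧ ∀ i, π.part i = if i < p then a else 0 := by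
  classical
  have hz : π.part 0 ≠ 0 := by
    intro h0
    apply hprime.1
    apply Set.eq_univ_of_forall
    intro μ
    refine hideal π μ hπI (fun i => ?_)
    have := π.antitone (Nat.zero_le i)
    omega
  obtain ⟨N, hN⟩ := π.eventually_zero
  have hex : ∃ i, π.part i = 0 := ⟨N, hN N le_rfl⟩
  have hp0 : π.part (Nat.find hex) = 0 := Nat.find_spec hex
  have hp1 : 1 ≤ Nat.find hex := by
    rcases Nat.eq_zero_or_pos (Nat.find hex) with h | h
    · rw [h] at hp0; exact absurd hp0 hz
    · exact h
  refine ⟨π.part 0, Nat.find hex, Nat.one_le_iff_ne_zero.mpr hz, hp1, fun i => ?_⟩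
  by_cases hi : i < Nat.find hex
  · rw [if_pos hi]
    by_contra hne
    exact minimal_rect I hideal hprime π hπI hmin i (Nat.find_min hex hi) hne
  · rw [if_neg hi]
    have := π.antitone (le_of_not_gt hi)
    omega

/-! ### Step 2: two distinct minimal rectangles contradict primality -/

lemma main_contra (I : Set Partition') (hideal : IsPartitionIdeal I)
    (hprime : IsMonomialPrime I)
    (π ρ : Partition') (hπI : π ∈ I) (hρI : ρ ∈ I)
    (hπmin : ∀ l : Partition', l ∈ I → l ≠ π → ¬ (∀ i, l.part i ≤ π.part i))
    (hρmin : ∀ l : Partition', l ∈ I → l ≠ ρ → ¬ (∀ i, l.part i ≤ ρ.part i))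
    (a p b q : ℕ)
    (hπr : ∀ i, π.part i = if i < p then a else 0)
    (hρr : ∀ i, ρ.part i = if i < q then b else 0)
    (hb : 1 ≤ b) (hba : b < a) (hp : 1 ≤ p) (hpq : p < q) : False := by
  -- l = (a-1)^p ⊊ π and m = b^(q-1) ⊊ ρ
  have hlI : rect (a - 1) p ∉ I := by
    intro h
    refine hπmin _ h ?_ ?_
    · intro he
      have h0 : (if 0 < p then a - 1 else 0) = π.part 0 :=
        congrArg (fun x => Partition'.part x 0) he
      rw [hπr 0, if_pos (by omega), if_pos (by omega)] at h0
      omega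
    · intro i
      rw [hπr i]
      dsimp only [rect]
      split_ifs <;> omega
  have hmI : rect b (q - 1) ∉ I := by
    intro h
    refine hρmin _ h ?_ ?_
    · intro he
      have h0 : (if q - 1 < q - 1 then b else 0) = ρ.part (q - 1) :=
        congrArg (fun x => Partition'.part x (q - 1)) he
      rw [hρr (q - 1), if_neg (lt_irrefl _), if_pos (by omega)] at h0
      omega
    · intro i
      rw [hρr i]
      dsimp only [rect]
      split_ifs <;> omega
  have hall : ∀ n : Partition',
      IsMonomialConstituent (rect (a - 1) p) (rect b (q - 1)) n → n ∈ I := by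
    rintro n ⟨σ, τ, hn⟩
    by_cases hc : ∀ j, j < p → σ j < q - 1
    · -- every row of l is merged with a genuine part of m : n ⊇ π
      have key : a ≤ n.part (p - 1) := by
        refine npart_ge n ((Finset.range p).image (fun s => τ.symm s)) ?_ ?_
        · rw [Finset.card_image_of_injective _ τ.symm.injective, Finset.card_range]
          omega
        · intro j hj
          obtain ⟨s, hs, rfl⟩ := Finset.mem_image.mp hj
          have hs' : s < p := Finset.mem_range.mp hs
          rw [hn, Equiv.apply_symm_apply]
          have h1 : (rect (a - 1) p).part s = a - 1 := by
            dsimp only [rect]; rw [if_pos hs']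
          have h2 : (rect b (q - 1)).part (σ s) = b := by
            dsimp only [rect]; rw [if_pos (hc s hs')]
          omega
      refine hideal π n hπI (fun i => ?_)
      rw [hπr i]
      split_ifs with hi
      · exact le_trans key (n.antitone (by omega))
      · exact Nat.zero_le _
    · -- some row of l is unmerged : n has at least q nonzero parts, n ⊇ ρ
      push_neg at hc
      obtain ⟨j0, hj0, hσj0⟩ := hc
      have key : b ≤ n.part (q - 1) := by
        have hnotmem : τ.symm j0 ∉
            (Finset.range (q - 1)).image (fun t => τ.symm (σ.symm t)) := by
          intro hmem
          obtain ⟨t, ht, heq⟩ := Finset.mem_image.mp hmem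
          have h1 : σ.symm t = j0 := τ.symm.injective heq
          have h2 : σ j0 = t := by rw [← h1, Equiv.apply_symm_apply]
          have := Finset.mem_range.mp ht
          omega
        refine npart_ge n (insert (τ.symm j0)
          ((Finset.range (q - 1)).image (fun t => τ.symm (σ.symm t)))) ?_ ?_
        · rw [Finset.card_insert_of_notMem hnotmem,
            Finset.card_image_of_injective _ (fun x y h => σ.symm.injective (τ.symm.injective h)),
            Finset.card_range]
        · intro j hj
          rcases Finset.mem_insert.mp hj with rfl | hj'
          · rw [hn, Equiv.apply_symm_apply]
            have h1 : (rect (a - 1) p).part j0 = a - 1 := by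
              dsimp only [rect]; rw [if_pos hj0]
            omega
          · obtain ⟨t, ht, rfl⟩ := Finset.mem_image.mp hj'
            rw [hn, Equiv.apply_symm_apply, Equiv.apply_symm_apply]
            have h2 : (rect b (q - 1)).part t = b := by
              dsimp only [rect]; rw [if_pos (Finset.mem_range.mp ht)]
            omega
      refine hideal ρ n hρI (fun i => ?_)
      rw [hρr i]
      split_ifs with hi
      · exact le_trans key (n.antitone (by omega))
      · exact Nat.zero_le _
  rcases hprime.2 _ _ hall with h | h
  · exact hlI h
  · exact hmI h

/-- Every nonempty monomial prime partition ideal contains a unique minimal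
element with respect to containment: a `π ∈ I` such that no `λ ∈ I` with
`λ ≠ π` satisfies `λ ⊆ π`. -/
theorem monomialPrime_unique_minimal (I : Set Partition') (hne : I.Nonempty)
    (hideal : IsPartitionIdeal I) (hprime : IsMonomialPrime I) :
    ∃! π : Partition', π ∈ I ∧
      ∀ l : Partition', l ∈ I → l ≠ π → ¬ (∀ i, l.part i ≤ π.part i) := by
  -- existence of a minimal element by well-foundedness of the weight
  obtain ⟨k, hk, hkmin⟩ :=
    (wellFounded_lt (α := ℕ)).has_min (wt '' I) (hne.image wt)
  obtain ⟨π, hπI, hπk⟩ := hk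
  have hπmin : ∀ l : Partition', l ∈ I → l ≠ π → ¬ (∀ i, l.part i ≤ π.part i) := by
    intro l hlI hlne hle
    exact hkmin (wt l) ⟨l, hlI, rfl⟩ (hπk ▸ wt_lt hle hlne)
  refine ⟨π, ⟨hπI, hπmin⟩, ?_⟩
  rintro ρ ⟨hρI, hρmin⟩
  by_contra hρπ
  obtain ⟨a, p, ha, hp, hπr⟩ := minimal_rect_data I hideal hprime π hπI hπmin
  obtain ⟨b, q, hb, hq, hρr⟩ := minimal_rect_data I hideal hprime ρ hρI hρmin
  have h1 : ∃ i, π.part i < ρ.part i := by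
    have h := hπmin ρ hρI hρπ
    push_neg at h
    obtain ⟨i, hi⟩ := h
    exact ⟨i, hi⟩
  have h2 : ∃ i, ρ.part i < π.part i := by
    have h := hρmin π hπI (fun h => hρπ h.symm)
    push_neg at h
    obtain ⟨i, hi⟩ := h
    exact ⟨i, hi⟩
  have hA : a < b ∨ p < q := by
    obtain ⟨i, hi⟩ := h1
    rw [hπr i, hρr i] at hi
    split_ifs at hi <;> omega
  have hB : b < a ∨ q < p := by
    obtain ⟨i, hi⟩ := h2
    rw [hπr i, hρr i] at hi
    split_ifs at hi <;> omega
  rcases hA with h | h <;> rcases hB with h' | h'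
  · omega
  · exact main_contra I hideal hprime ρ π hρI hπI hρmin hπmin b q a p hρr hπr ha h hq h'
  · exact main_contra I hideal hprime π ρ hπI hρI hπmin hρmin a p b q hπr hρr hb h' hp h
  · omega
end

section
/- For all natural numbers x and y, the partition ideal I_(x,y) of all partitions λ with λ_{x+1} ≥ y+1 is Schur prime; conversely, every nonempty Schur prime partition ideal equals I_(x,y) for some natural numbers x and y. -/
/-- The cell in row `i`, column `j` (0-indexed) belongs to the skew diagram `ν/λ`. -/
def InSkew (l n : Partition') (i j : ℕ) : Prop := l.part i ≤ j ∧ j < n.part i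

/-- `T` is a Littlewood–Richardson tableau of shape `ν/λ` and type `μ`:
its entries (on the cells of `ν/λ`) are positive integers, weakly increasing
along rows and strictly increasing down columns; for each `k ≥ 0` the entry
`k+1` occurs exactly `μ_{k+1}` times; and its reverse reading word (rows top to
bottom, each row right to left) is a lattice permutation, i.e. in every prefix
(the cells in rows `< r` together with the cells of row `r` in columns `≥ c`)
the entry `k+1` occurs at least as often as the entry `k+2`. -/
def IsLRTableau (l n m : Partition') (T : ℕ → ℕ → ℕ) : Prop :=
  (∀ i j, InSkew l n i j → 1 ≤ T i j) ∧
  (∀ i j j', InSkew l n i j → InSkew l n i j' → j ≤ j' → T i j ≤ T i j') ∧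
  (∀ i i' j, InSkew l n i j → InSkew l n i' j → i < i' → T i j < T i' j) ∧
  (∀ k : ℕ, Set.ncard {p : ℕ × ℕ | InSkew l n p.1 p.2 ∧ T p.1 p.2 = k + 1} = m.part k) ∧
  (∀ r c k : ℕ,
    Set.ncard {p : ℕ × ℕ | InSkew l n p.1 p.2 ∧ (p.1 < r ∨ (p.1 = r ∧ c ≤ p.2)) ∧
        T p.1 p.2 = k + 2} ≤
    Set.ncard {p : ℕ × ℕ | InSkew l n p.1 p.2 ∧ (p.1 < r ∨ (p.1 = r ∧ c ≤ p.2)) ∧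
        T p.1 p.2 = k + 1})

/-- `ν` is a Schur constituent of `s_λ · s_μ`: `λ ⊆ ν` and there is a
Littlewood–Richardson tableau of shape `ν/λ` and type `μ`. -/
def IsSchurConstituent (l m n : Partition') : Prop :=
  (∀ i, l.part i ≤ n.part i) ∧ ∃ T : ℕ → ℕ → ℕ, IsLRTableau l n m T

/-- A set of partitions is Schur prime if it is not everything and whenever
every Schur constituent of `s_λ · s_μ` lies in it, `λ` or `μ` lies in it. -/
def IsSchurPrime (I : Set Partition') : Prop :=
  I ≠ Set.univ ∧ ∀ l m : Partition',
    (∀ n : Partition', IsSchurConstituent l m n → n ∈ I) → l ∈ I ∨ m ∈ I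

theorem Nat.lt_or_exists_eq_add (i x : ℕ) : i < x ∨ ∃ t, i = x + t :=
  (lt_or_ge i x).imp_right Nat.exists_eq_add_of_le

namespace Partition'

instance : Preorder Partition' where
  le l n := ∀ i, l.part i ≤ n.part i
  le_refl _ _ := le_rfl
  le_trans _ _ _ hab hbc i := (hab i).trans (hbc i)

instance : OrderBot Partition' where
  bot := ⟨fun _ => 0, fun _ _ _ => le_rfl, ⟨0, fun _ _ => rfl⟩⟩
  bot_le _ _ := Nat.zero_le _

@[simp] theorem bot_part (i : ℕ) : (⊥ : Partition').part i = 0 := rfl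

theorem part_le_part_zero (l : Partition') (i : ℕ) : l.part i ≤ l.part 0 :=
  l.antitone i.zero_le

theorem nonempty_setOf_part_le (l : Partition') (j : ℕ) : {i | l.part i ≤ j}.Nonempty :=
  let ⟨N, hN⟩ := l.eventually_zero
  ⟨N, by simp [hN N le_rfl]⟩

noncomputable def transpose (l : Partition') : Partition' where
  part j := sInf {i | l.part i ≤ j}
  antitone _ _ hjj' := Nat.sInf_le ((Nat.sInf_mem (l.nonempty_setOf_part_le _)).trans hjj')
  eventually_zero := ⟨l.part 0, fun _ hj => Nat.sInf_eq_zero.mpr (Or.inl hj)⟩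

theorem transpose_part_le_iff {l : Partition'} {i j : ℕ} :
    l.transpose.part j ≤ i ↔ l.part i ≤ j :=
  ⟨fun h => (l.antitone h).trans (Nat.sInf_mem (l.nonempty_setOf_part_le j)),
    fun h => Nat.sInf_le h⟩

theorem lt_transpose_part_iff {l : Partition'} {i j : ℕ} :
    i < l.transpose.part j ↔ j < l.part i := by
  simpa only [not_le] using transpose_part_le_iff.not

instance : Add Partition' where
  add l m :=
    { part i := l.part i + m.part i
      antitone _ _ h := add_le_add (l.antitone h) (m.antitone h)
      eventually_zero :=
        let ⟨N, hN⟩ := l.eventually_zero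
        let ⟨N', hN'⟩ := m.eventually_zero
        ⟨max N N', fun i hi => by
          simp [hN i (le_of_max_le_left hi), hN' i (le_of_max_le_right hi)]⟩ }

@[simp] theorem add_part (l m : Partition') (i : ℕ) : (l + m).part i = l.part i + m.part i := rfl

/-- The partition whose rows are those of `l` and of `m`, sorted together. -/
noncomputable def union (l m : Partition') : Partition' := (l.transpose + m.transpose).transpose

theorem le_union_left (l m : Partition') : l ≤ l.union m := fun i => by
  by_contra! h
  have h' : i < (l.transpose + m.transpose).part ((l.union m).part i) :=
    (lt_transpose_part_iff.mpr h).trans_le (Nat.le_add_right _ _)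
  exact lt_irrefl _ (lt_transpose_part_iff.mpr h')

theorem le_union_right (l m : Partition') : m ≤ l.union m := fun i => by
  by_contra! h
  have h' : i < (l.transpose + m.transpose).part ((l.union m).part i) :=
    (lt_transpose_part_iff.mpr h).trans_le (Nat.le_add_left _ _)
  exact lt_irrefl _ (lt_transpose_part_iff.mpr h')

theorem union_part_zero (l m : Partition') :
    (l.union m).part 0 = max (l.part 0) (m.part 0) := by
  have hl : l.transpose.part (max (l.part 0) (m.part 0)) ≤ 0 :=
    transpose_part_le_iff.mpr (le_max_left _ _)
  have hm : m.transpose.part (max (l.part 0) (m.part 0)) ≤ 0 :=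
    transpose_part_le_iff.mpr (le_max_right _ _)
  exact le_antisymm (transpose_part_le_iff.mpr (by simp only [add_part]; omega))
    (max_le (l.le_union_left m 0) (l.le_union_right m 0))

def drop (x : ℕ) (l : Partition') : Partition' where
  part t := l.part (x + t)
  antitone _ _ h := l.antitone (by omega)
  eventually_zero :=
    let ⟨N, hN⟩ := l.eventually_zero
    ⟨N, fun _ hi => hN _ (by omega)⟩

@[simp] theorem drop_part (x : ℕ) (l : Partition') (t : ℕ) :
    (l.drop x).part t = l.part (x + t) := rfl

end Partition'

theorem finite_setOf_inSkew (l n : Partition') : {p : ℕ × ℕ | InSkew l n p.1 p.2}.Finite := by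
  obtain ⟨N, hN⟩ := n.eventually_zero
  refine ((Set.finite_Iio N).prod (Set.finite_Iio (n.part 0))).subset
    fun ⟨i, j⟩ ⟨_, hj⟩ => ?_
  refine Set.mem_prod.mpr ⟨Set.mem_Iio.mpr (lt_of_not_ge fun hi => ?_),
    Set.mem_Iio.mpr (hj.trans_le (n.part_le_part_zero i))⟩
  simp [hN i hi] at hj

def entryCells (l n : Partition') (T : ℕ → ℕ → ℕ) (e : ℕ) : Set (ℕ × ℕ) :=
  {p | InSkew l n p.1 p.2 ∧ T p.1 p.2 = e}

theorem lattice_of_injective_cells {l n m : Partition'} {T : ℕ → ℕ → ℕ}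
    (c : ℕ → ℕ → ℕ × ℕ) (hc : ∀ k, (c k).Injective)
    (hcells : ∀ k, entryCells l n T (k + 1) = c k '' Set.Iio (m.part k))
    (hrow : ∀ k s, (c k s).1 < (c (k + 1) s).1) (hm : ∀ k, m.part (k + 1) ≤ m.part k)
    (r col k : ℕ) :
    Set.ncard {p : ℕ × ℕ | InSkew l n p.1 p.2 ∧ (p.1 < r ∨ (p.1 = r ∧ col ≤ p.2)) ∧
        T p.1 p.2 = k + 2} ≤
    Set.ncard {p : ℕ × ℕ | InSkew l n p.1 p.2 ∧ (p.1 < r ∨ (p.1 = r ∧ col ≤ p.2)) ∧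
        T p.1 p.2 = k + 1} := by
  set S := {s | s < m.part (k + 1) ∧
    ((c (k + 1) s).1 < r ∨ ((c (k + 1) s).1 = r ∧ col ≤ (c (k + 1) s).2))}
  have hS : S.Finite := (Set.finite_Iio _).subset fun s hs => hs.1
  have hsub : {p : ℕ × ℕ | InSkew l n p.1 p.2 ∧ (p.1 < r ∨ (p.1 = r ∧ col ≤ p.2)) ∧
      T p.1 p.2 = k + 2} ⊆ c (k + 1) '' S := by
    rintro p ⟨hp, hpre, hT⟩
    obtain ⟨s, hs, rfl⟩ := (hcells (k + 1)).subset ⟨hp, hT⟩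
    exact ⟨s, ⟨hs, hpre⟩, rfl⟩
  have hsup : c k '' S ⊆ {p : ℕ × ℕ | InSkew l n p.1 p.2 ∧
      (p.1 < r ∨ (p.1 = r ∧ col ≤ p.2)) ∧ T p.1 p.2 = k + 1} := by
    rintro _ ⟨s, ⟨hs, hpre⟩, rfl⟩
    obtain ⟨hp, hT⟩ := (hcells k).superset ⟨s, (hs.trans_le (hm k) : s < m.part k), rfl⟩
    have := hrow k s
    exact ⟨hp, Or.inl (by omega), hT⟩
  calc _ ≤ (c (k + 1) '' S).ncard := Set.ncard_le_ncard hsub (hS.image _)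
    _ = (c k '' S).ncard := by
      rw [Set.ncard_image_of_injective _ (hc _), Set.ncard_image_of_injective _ (hc _)]
    _ ≤ _ := Set.ncard_le_ncard hsup ((finite_setOf_inSkew l n).subset fun p hp => hp.1)

namespace Partition'

noncomputable def sumUnion (x : ℕ) (l m : Partition') : Partition' where
  part i := if i < x then l.part i + m.part i else ((l.drop x).union (m.drop x)).part (i - x)
  antitone i j hij := by
    by_cases hj : j < x
    · simp only [if_pos hj, if_pos (hij.trans_lt hj)]
      exact add_le_add (l.antitone hij) (m.antitone hij)
    by_cases hi : i < x
    · have h0 := ((l.drop x).union (m.drop x)).part_le_part_zero (j - x)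
      rw [union_part_zero] at h0
      simp only [drop_part, add_zero] at h0
      have := l.antitone hi.le
      have := m.antitone hi.le
      simp only [if_pos hi, if_neg hj]
      omega
    · simp only [if_neg hi, if_neg hj]
      exact ((l.drop x).union (m.drop x)).antitone (by omega)
  eventually_zero :=
    let ⟨N, hN⟩ := ((l.drop x).union (m.drop x)).eventually_zero
    ⟨x + N, fun i hi => by simp only [if_neg (show ¬i < x by omega)]; exact hN _ (by omega)⟩

variable {x : ℕ} {l m : Partition'}

theorem sumUnion_part_of_lt {i : ℕ} (hi : i < x) :
    (sumUnion x l m).part i = l.part i + m.part i :=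
  if_pos hi

theorem sumUnion_part_add (t : ℕ) :
    (sumUnion x l m).part (x + t) = ((l.drop x).union (m.drop x)).part t := by
  simp [sumUnion]

theorem sumUnion_part_self : (sumUnion x l m).part x = max (l.part x) (m.part x) := by
  simpa [union_part_zero] using sumUnion_part_add (x := x) (l := l) (m := m) 0

theorem le_sumUnion : l ≤ sumUnion x l m := fun i => by
  obtain hi | ⟨t, rfl⟩ := Nat.lt_or_exists_eq_add i x
  · simp [sumUnion_part_of_lt hi]
  · simpa [sumUnion_part_add] using (l.drop x).le_union_left (m.drop x) t

theorem inSkew_sumUnion_of_lt {i j : ℕ} (hi : i < x) :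
    InSkew l (sumUnion x l m) i j ↔ l.part i ≤ j ∧ j < l.part i + m.part i := by
  rw [InSkew, sumUnion_part_of_lt hi]

theorem inSkew_sumUnion_add {t j : ℕ} :
    InSkew l (sumUnion x l m) (x + t) j ↔ (l.drop x).transpose.part j ≤ t ∧
      t < (l.drop x).transpose.part j + (m.drop x).transpose.part j := by
  rw [InSkew, sumUnion_part_add, union, lt_transpose_part_iff, transpose_part_le_iff]
  rfl

/-- Row `i < x` of the skew shape is filled with `i + 1`; below row `x`, each column is filled
with `x + 1, x + 2, …` from top to bottom. -/
noncomputable def sumUnionTableau (x : ℕ) (l : Partition') (i j : ℕ) : ℕ :=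
  if i < x then i + 1 else i + 1 - (l.drop x).transpose.part j

/-- The `s`-th cell of `sumUnionTableau x l` containing `k + 1`. -/
noncomputable def sumUnionCell (x : ℕ) (l : Partition') (k s : ℕ) : ℕ × ℕ :=
  if k < x then (k, l.part k + s) else (k + (l.drop x).transpose.part s, s)

theorem sumUnionCell_injective (k : ℕ) : (sumUnionCell x l k).Injective := fun s s' h => by
  by_cases hk : k < x
  · simpa [sumUnionCell, if_pos hk] using h
  · simp only [sumUnionCell, if_neg hk, Prod.mk.injEq] at h
    exact h.2

theorem sumUnionCell_fst_lt_succ (k s : ℕ) :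
    (sumUnionCell x l k s).1 < (sumUnionCell x l (k + 1) s).1 := by
  unfold sumUnionCell
  split_ifs <;> simp <;> omega

theorem entryCells_sumUnionTableau (k : ℕ) :
    entryCells l (sumUnion x l m) (sumUnionTableau x l) (k + 1) =
      sumUnionCell x l k '' Set.Iio (m.part k) := by
  ext ⟨i, j⟩
  simp only [entryCells, Set.mem_ofPred_eq, Set.mem_image, Set.mem_Iio, sumUnionCell,
    sumUnionTableau, Prod.ext_iff]
  obtain hi | ⟨t, rfl⟩ := Nat.lt_or_exists_eq_add i x
  · rw [inSkew_sumUnion_of_lt hi, if_pos hi]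
    by_cases hk : k < x
    · simp only [if_pos hk]
      constructor
      · rintro ⟨⟨h1, h2⟩, h3⟩
        obtain rfl : i = k := by omega
        exact ⟨j - l.part i, by omega, rfl, by omega⟩
      · rintro ⟨s, hs, h1, h2⟩
        subst h1
        omega
    · simp only [if_neg hk]
      omega
  · rw [inSkew_sumUnion_add, if_neg (by omega)]
    by_cases hk : k < x
    · simp only [if_pos hk]
      omega
    · obtain ⟨u, rfl⟩ := Nat.exists_eq_add_of_le (not_lt.mp hk)
      have hm : u < (m.drop x).transpose.part j ↔ j < m.part (x + u) := lt_transpose_part_iff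
      simp only [if_neg hk]
      constructor
      · rintro ⟨⟨h1, h2⟩, h3⟩
        exact ⟨j, hm.mp (by omega), by omega, rfl⟩
      · rintro ⟨s, hs, h1, rfl⟩
        have := hm.mpr hs
        omega

theorem isLRTableau_sumUnionTableau :
    IsLRTableau l (sumUnion x l m) m (sumUnionTableau x l) := by
  refine ⟨fun i j hij => ?_, fun i j j' hij hij' hjj' => ?_, fun i i' j hij hi'j hii' => ?_,
    fun k => ?_, lattice_of_injective_cells (sumUnionCell x l) sumUnionCell_injective
      entryCells_sumUnionTableau sumUnionCell_fst_lt_succ fun k => m.antitone k.le_succ⟩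
  · obtain hi | ⟨t, rfl⟩ := Nat.lt_or_exists_eq_add i x
    · simp [sumUnionTableau, if_pos hi]
    · have := (inSkew_sumUnion_add.mp hij).1
      simp only [sumUnionTableau, if_neg (show ¬x + t < x by omega)]
      omega
  · unfold sumUnionTableau
    split_ifs
    · rfl
    · have := (l.drop x).transpose.antitone hjj'
      omega
  · obtain hi' | ⟨t', rfl⟩ := Nat.lt_or_exists_eq_add i' x
    · simp only [sumUnionTableau, if_pos hi', if_pos (hii'.trans hi')]
      omega
    have h' := inSkew_sumUnion_add.mp hi'j
    obtain hi | ⟨t, rfl⟩ := Nat.lt_or_exists_eq_add i x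
    · simp only [sumUnionTableau, if_pos hi, if_neg (show ¬x + t' < x by omega)]
      omega
    · simp only [sumUnionTableau, if_neg (show ¬x + t < x by omega),
        if_neg (show ¬x + t' < x by omega)]
      have := (inSkew_sumUnion_add.mp hij).1
      omega
  · change (entryCells _ _ _ (k + 1)).ncard = _
    rw [entryCells_sumUnionTableau, Set.ncard_image_of_injective _ (sumUnionCell_injective k),
      Set.ncard_Iio_nat]

end Partition'

theorem isSchurConstituent_sumUnion (x : ℕ) (l m : Partition') :
    IsSchurConstituent l m (Partition'.sumUnion x l m) :=
  ⟨Partition'.le_sumUnion, _, Partition'.isLRTableau_sumUnionTableau⟩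

theorem isSchurPrime_setOf_le_part (x y : ℕ) :
    IsSchurPrime {l : Partition' | y + 1 ≤ l.part x} := by
  refine ⟨fun h => ?_, fun l m h => ?_⟩
  · simpa using h.symm.subset (Set.mem_univ (⊥ : Partition'))
  · have := h _ (isSchurConstituent_sumUnion x l m)
    simpa [Partition'.sumUnion_part_self, le_max_iff] using this

namespace IsLRTableau

variable {l n m : Partition'} {T : ℕ → ℕ → ℕ}

theorem le_row (h : IsLRTableau l n m T) {k i j : ℕ} (hij : InSkew l n i j)
    (hT : T i j = k + 1) : k ≤ i := by
  induction k generalizing i j with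
  | zero => exact i.zero_le
  | succ k ih =>
    have hpos : 0 < Set.ncard {p : ℕ × ℕ | InSkew l n p.1 p.2 ∧
        (p.1 < i ∨ (p.1 = i ∧ j ≤ p.2)) ∧ T p.1 p.2 = k + 2} :=
      (Set.ncard_pos ((finite_setOf_inSkew l n).subset fun p hp => hp.1)).mpr
        ⟨(i, j), hij, Or.inr ⟨rfl, le_rfl⟩, hT⟩
    obtain ⟨⟨i', j'⟩, hi'j', hpre, hT'⟩ :=
      Set.nonempty_of_ncard_ne_zero (hpos.trans_le (h.2.2.2.2 i j k)).ne'
    dsimp only at hi'j' hpre hT'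
    rcases hpre with hi' | ⟨rfl, hjj'⟩
    · have := ih hi'j' hT'
      omega
    · have := h.2.1 i' j j' hij hi'j' hjj'
      omega

theorem injOn_snd (h : IsLRTableau l n m T) (k : ℕ) :
    Set.InjOn Prod.snd (entryCells l n T (k + 1)) := by
  rintro ⟨i, j⟩ ⟨hij, hT⟩ ⟨i', j'⟩ ⟨hi'j', hT'⟩ (rfl : j = j')
  dsimp only at hT hT'
  rcases lt_trichotomy i i' with hii' | rfl | hi'i
  · have := h.2.2.1 i i' j hij hi'j' hii'
    omega
  · rfl
  · have := h.2.2.1 i' i j hi'j' hij hi'i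
    omega

theorem image_snd_subset (h : IsLRTableau l n m T) (k : ℕ) :
    Prod.snd '' entryCells l n T (k + 1) ⊆ Set.Iio (n.part k) := by
  rintro _ ⟨⟨i, j⟩, ⟨hij, hT⟩, rfl⟩
  exact hij.2.trans_le (n.antitone (h.le_row hij hT))

theorem ncard_image_snd (h : IsLRTableau l n m T) (k : ℕ) :
    (Prod.snd '' entryCells l n T (k + 1)).ncard = m.part k := by
  rw [(h.injOn_snd k).ncard_image]
  exact h.2.2.2.1 k

theorem part_le (h : IsLRTableau l n m T) (k : ℕ) : m.part k ≤ n.part k := by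
  simpa [h.ncard_image_snd k] using Set.ncard_le_ncard (h.image_snd_subset k)

theorem exists_inSkew_of_part_le (h : IsLRTableau l n m T) {k j : ℕ}
    (hk : n.part k ≤ m.part k) (hj : j < n.part k) : ∃ i, InSkew l n i j ∧ T i j = k + 1 := by
  have hcols := Set.eq_of_subset_of_ncard_le (h.image_snd_subset k)
    (by rw [h.ncard_image_snd k, Set.ncard_Iio_nat]; exact hk)
  obtain ⟨⟨i, _⟩, hi, rfl⟩ := hcols.symm.subset (Set.mem_Iio.mpr hj)
  exact ⟨i, hi⟩

end IsLRTableau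

theorem IsSchurConstituent.right_le {l m n : Partition'} (h : IsSchurConstituent l m n) : m ≤ n :=
  let ⟨_, _, hT⟩ := h
  hT.part_le

theorem isPartitionIdeal_iff_isUpperSet {I : Set Partition'} :
    IsPartitionIdeal I ↔ IsUpperSet I :=
  ⟨fun h _ _ hab ha => h _ _ ha hab, fun h _ _ ha hab => h hab ha⟩

theorem exists_mem_forall_lt_le_part {J : Set Partition'} (hdir : DirectedOn (· ≤ ·) J)
    (hne : J.Nonempty) {f : ℕ → ℕ} :
    ∀ {N : ℕ}, (∀ i < N, ∃ p ∈ J, f i ≤ p.part i) →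
      ∃ u ∈ J, ∀ i < N, f i ≤ u.part i
  | 0, _ => let ⟨u, hu⟩ := hne; ⟨u, hu, by simp⟩
  | N + 1, h => by
    obtain ⟨u, hu, hfu⟩ :=
      exists_mem_forall_lt_le_part hdir hne (N := N) fun i hi => h i (by omega)
    obtain ⟨p, hp, hfp⟩ := h N N.lt_succ_self
    obtain ⟨v, hv, huv, hpv⟩ := hdir u hu p hp
    refine ⟨v, hv, fun i hi => ?_⟩
    rcases Nat.lt_succ_iff_lt_or_eq.mp hi with hi | rfl
    · exact (hfu i hi).trans (huv i)
    · exact hfp.trans (hpv i)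

theorem exists_bddAbove_part {J : Set Partition'} (hJ : IsLowerSet J)
    (hdir : DirectedOn (· ≤ ·) J) (hne : J.Nonempty) (huniv : J ≠ Set.univ) :
    ∃ x, BddAbove ((fun p : Partition' => p.part x) '' J) := by
  by_contra! hunbdd
  obtain ⟨q, hq⟩ := (Set.ne_univ_iff_exists_notMem J).mp huniv
  obtain ⟨N, hN⟩ := q.eventually_zero
  obtain ⟨u, hu, hqu⟩ := exists_mem_forall_lt_le_part hdir hne (f := q.part) (N := N)
    fun i _ => by
      obtain ⟨_, ⟨p, hp, rfl⟩, hlt⟩ := not_bddAbove_iff.mp (hunbdd i) (q.part i)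
      exact ⟨p, hp, hlt.le⟩
  refine hq (hJ (fun i => ?_) hu)
  rcases lt_or_ge i N with hi | hi
  · exact hqu i hi
  · simp [hN i hi]

namespace Partition'

def twoRect (x a y m : ℕ) : Partition' where
  part i := if i < x then a + y else if i < x + m then y else 0
  antitone i j _ := by split_ifs <;> omega
  eventually_zero := ⟨x + m, fun i hi => by split_ifs <;> omega⟩

theorem twoRect_part (x a y m i : ℕ) :
    (twoRect x a y m).part i = if i < x then a + y else if i < x + m then y else 0 := rfl

theorem le_twoRect {p : Partition'} {x y m : ℕ} (hpx : p.part x ≤ y)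
    (hp : ∀ i, x + m ≤ i → p.part i = 0) : p ≤ twoRect x (p.part 0) y m := fun i => by
  rw [twoRect_part]
  split_ifs with h1 h2
  · exact (p.part_le_part_zero i).trans (Nat.le_add_right _ _)
  · exact (p.antitone (not_lt.mp h1)).trans hpx
  · exact (hp i (not_lt.mp h2)).le

theorem twoRect_one_mem {J : Set Partition'} (hJ : IsLowerSet J) (hdir : DirectedOn (· ≤ ·) J)
    (hne : J.Nonempty) {x : ℕ}
    (hunbdd : ∀ i < x, ¬BddAbove ((fun p : Partition' => p.part i) '' J))
    (a : ℕ) {p : Partition'} (hp : p ∈ J) : twoRect x a (p.part x) 1 ∈ J := by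
  obtain ⟨u, hu, hfu⟩ := exists_mem_forall_lt_le_part hdir hne
    (f := fun i => if i < x then a + p.part x else p.part x) (N := x + 1) fun i hi => by
      by_cases hix : i < x
      · obtain ⟨_, ⟨q, hq, rfl⟩, hlt⟩ := not_bddAbove_iff.mp (hunbdd i hix) (a + p.part x)
        exact ⟨q, hq, by simpa [hix] using hlt.le⟩
      · obtain rfl : i = x := by omega
        exact ⟨p, hp, by simp⟩
  refine hJ (fun i => ?_) hu
  have := hfu i
  simp only [twoRect_part] at this ⊢
  split_ifs at this ⊢ <;> omega

end Partition'

open Partition'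

section Converse

variable {I : Set Partition'}

theorem IsSchurPrime.exists_isSchurConstituent_notMem (hP : IsSchurPrime I) {l m : Partition'}
    (hl : l ∉ I) (hm : m ∉ I) : ∃ n, IsSchurConstituent l m n ∧ n ∉ I := by
  by_contra! h
  exact (hP.2 l m h).elim hl hm

theorem IsSchurPrime.directedOn_compl (hP : IsSchurPrime I) : DirectedOn (· ≤ ·) Iᶜ :=
  fun _ hl _ hm =>
    let ⟨n, hn, hnI⟩ := hP.exists_isSchurConstituent_notMem hl hm
    ⟨n, hnI, hn.1, hn.right_le⟩

/-- The `y` entries `x + 1` of the constituent fill row `x` of the second factor, so they occupy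
every column `j < y`, and the one in column `y - 1` lies below row `x + m`. -/
theorem IsSchurPrime.twoRect_succ_notMem (hP : IsSchurPrime I) (hI : IsUpperSet I) {x a y m : ℕ}
    (hy : ∀ p ∉ I, p.part x ≤ y) (hm : twoRect x a y m ∉ I) (h1 : twoRect x a y 1 ∉ I) :
    twoRect x a y (m + 1) ∉ I := by
  obtain ⟨n, ⟨hAn, T, hT⟩, hn⟩ := hP.exists_isSchurConstituent_notMem hm h1
  have hnx : n.part x = y := le_antisymm (hy n hn) (by simpa [twoRect_part] using hT.part_le x)
  have hrow : y ≤ n.part (x + m) := by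
    rcases Nat.eq_zero_or_pos y with rfl | hy0
    · exact Nat.zero_le _
    obtain ⟨i, ⟨hi, hin⟩, -⟩ := hT.exists_inSkew_of_part_le (k := x) (j := y - 1)
      (by simp [twoRect_part, hnx]) (by omega)
    rw [twoRect_part] at hi
    have hxm : x + m ≤ i := by split_ifs at hi <;> omega
    exact Nat.le_of_pred_lt (hin.trans_le (n.antitone hxm))
  refine fun hmem => hn (hI (fun i => ?_) hmem)
  have := hAn i
  rw [twoRect_part] at this ⊢
  split_ifs at this ⊢ <;> first | omega | rwa [show i = x + m by omega]

/-- `x` is the first row that is bounded on `Iᶜ`, and `y` the largest length of row `x`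
in `Iᶜ`. -/
theorem IsSchurPrime.exists_eq_setOf_le_part (hne : I.Nonempty) (hI : IsUpperSet I)
    (hP : IsSchurPrime I) : ∃ x y : ℕ, I = {l : Partition' | y + 1 ≤ l.part x} := by
  classical
  have hJne : Iᶜ.Nonempty := ⟨⊥, fun h => hP.1 (hI.bot_mem.mp h)⟩
  have hbdd := exists_bddAbove_part hI.compl hP.directedOn_compl hJne (Set.compl_ne_univ.mpr hne)
  set x := Nat.find hbdd
  set y := sSup ((fun p : Partition' => p.part x) '' Iᶜ)
  have hy : ∀ p ∉ I, p.part x ≤ y := fun p hp =>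
    le_csSup (Nat.find_spec hbdd) ⟨p, hp, rfl⟩
  obtain ⟨p, hp, hpy : p.part x = y⟩ := Nat.sSup_mem (hJne.image _) (Nat.find_spec hbdd)
  have hrect : ∀ a m, twoRect x a y (m + 1) ∉ I := fun a m => by
    have h1 : twoRect x a y 1 ∉ I := hpy ▸ twoRect_one_mem hI.compl hP.directedOn_compl hJne
      (fun i hi => Nat.find_min hbdd hi) a hp
    induction m with
    | zero => exact h1
    | succ m ih => exact hP.twoRect_succ_notMem hI hy ih h1
  refine ⟨x, y, Set.ext fun q => ⟨fun hq => ?_, fun hq => ?_⟩⟩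
  · show y + 1 ≤ q.part x
    by_contra! hqx
    obtain ⟨N, hN⟩ := q.eventually_zero
    exact hrect (q.part 0) N
      (hI (le_twoRect (Nat.le_of_lt_succ hqx) fun i hi => hN i (by omega)) hq)
  · by_contra hqI
    exact (hy q hqI).not_gt hq

end Converse

/-- For all `x y : ℕ`, the partition ideal `I_(x,y)` of partitions `λ` with
`λ_{x+1} ≥ y+1` (0-indexed: `part x ≥ y + 1`) is Schur prime; conversely every
nonempty Schur prime partition ideal is of this form. -/
theorem Ixy_schurPrime_and_converse :
    (∀ x y : ℕ, IsSchurPrime {l : Partition' | y + 1 ≤ l.part x}) ∧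
    (∀ I : Set Partition', I.Nonempty → IsPartitionIdeal I → IsSchurPrime I →
      ∃ x y : ℕ, I = {l : Partition' | y + 1 ≤ l.part x}) :=
  ⟨isSchurPrime_setOf_le_part, fun _ hne hI hP =>
    hP.exists_eq_setOf_le_part hne (isPartitionIdeal_iff_isUpperSet.mp hI)⟩
end
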